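/- Let C be an N×M and D an M×N matrix with nonnegative integer entries, and set A = CD, B = DC. Define h : X̄_A → X̄_B by h((c_n, d_n)_{n∈ℤ}) = ((d_n, c_{n+1}))_{n∈ℤ}. Then h is a well-defined homeomorphism of the two-sided shift spaces satisfying h ∘ σ̄_A = σ̄_B ∘ h. In particular, if A and B are elementary equivalent nonnegative integer matrices, then the two-sided topological Markov shifts (X̄_A, σ̄_A) and (X̄_B, σ̄_B) are topologically conjugate. -/

import Mathlib

open Matrix

/-- The edge set of the directed graph of a rectangular matrix `C` with nonnegative integer
entries: there are `C i j` edges from vertex `i` to vertex `j`. -/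
def Edge {N M : ℕ} (C : Matrix (Fin N) (Fin M) ℕ) : Type :=
  Σ i : Fin N, Σ j : Fin M, Fin (C i j)

instance {N M : ℕ} (C : Matrix (Fin N) (Fin M) ℕ) : Fintype (Edge C) := by
  unfold Edge; haveI : ∀ i : Fin N, Fintype (Σ j : Fin M, Fin (C i j)) := fun i => inferInstance; infer_instance

instance {N M : ℕ} (C : Matrix (Fin N) (Fin M) ℕ) : DecidableEq (Edge C) := by
  unfold Edge; infer_instance

/-- The source vertex of an edge. -/
def Edge.src {N M : ℕ} {C : Matrix (Fin N) (Fin M) ℕ} (e : Edge C) : Fin N := e.1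

/-- The target vertex of an edge. -/
def Edge.tar {N M : ℕ} {C : Matrix (Fin N) (Fin M) ℕ} (e : Edge C) : Fin M := e.2.1

/-- The edge set of `A = CD`, realized as composable pairs `(c, d)` of edges of `C` and `D`. -/
def PairEdgeA {N M : ℕ} (C : Matrix (Fin N) (Fin M) ℕ) (D : Matrix (Fin M) (Fin N) ℕ) :
    Type :=
  {p : Edge C × Edge D // p.1.tar = p.2.src}

/-- The edge set of `B = DC`, realized as composable pairs `(d, c)` of edges of `D` and `C`. -/
def PairEdgeB {N M : ℕ} (C : Matrix (Fin N) (Fin M) ℕ) (D : Matrix (Fin M) (Fin N) ℕ) :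
    Type :=
  {p : Edge D × Edge C // p.1.tar = p.2.src}

instance {N M : ℕ} (C : Matrix (Fin N) (Fin M) ℕ) (D : Matrix (Fin M) (Fin N) ℕ) :
    Fintype (PairEdgeA C D) := by unfold PairEdgeA; infer_instance

instance {N M : ℕ} (C : Matrix (Fin N) (Fin M) ℕ) (D : Matrix (Fin M) (Fin N) ℕ) :
    Fintype (PairEdgeB C D) := by unfold PairEdgeB; infer_instance

instance {N M : ℕ} (C : Matrix (Fin N) (Fin M) ℕ) (D : Matrix (Fin M) (Fin N) ℕ) :
    DecidableEq (PairEdgeA C D) := by unfold PairEdgeA; infer_instance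

instance {N M : ℕ} (C : Matrix (Fin N) (Fin M) ℕ) (D : Matrix (Fin M) (Fin N) ℕ) :
    DecidableEq (PairEdgeB C D) := by unfold PairEdgeB; infer_instance

instance {N M : ℕ} (C : Matrix (Fin N) (Fin M) ℕ) (D : Matrix (Fin M) (Fin N) ℕ) :
    TopologicalSpace (PairEdgeA C D) := ⊥

instance {N M : ℕ} (C : Matrix (Fin N) (Fin M) ℕ) (D : Matrix (Fin M) (Fin N) ℕ) :
    DiscreteTopology (PairEdgeA C D) := ⟨rfl⟩

instance {N M : ℕ} (C : Matrix (Fin N) (Fin M) ℕ) (D : Matrix (Fin M) (Fin N) ℕ) :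
    TopologicalSpace (PairEdgeB C D) := ⊥

instance {N M : ℕ} (C : Matrix (Fin N) (Fin M) ℕ) (D : Matrix (Fin M) (Fin N) ℕ) :
    DiscreteTopology (PairEdgeB C D) := ⟨rfl⟩

/-- The two-sided topological Markov shift space `X̄_A` for `A = CD`, realized on the pair
edge set `E_A`, with the topology induced from the product topology. -/
abbrev XbarA {N M : ℕ} (C : Matrix (Fin N) (Fin M) ℕ) (D : Matrix (Fin M) (Fin N) ℕ) :
    Type :=
  {x : ℤ → PairEdgeA C D // ∀ n, (x n).val.2.tar = (x (n + 1)).val.1.src}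

/-- The two-sided topological Markov shift space `X̄_B` for `B = DC`, realized on the pair
edge set `E_B`, with the topology induced from the product topology. -/
abbrev XbarB {N M : ℕ} (C : Matrix (Fin N) (Fin M) ℕ) (D : Matrix (Fin M) (Fin N) ℕ) :
    Type :=
  {y : ℤ → PairEdgeB C D // ∀ n, (y n).val.2.tar = (y (n + 1)).val.1.src}

/-- The shift homeomorphism `σ̄_A` on `X̄_A` (as a map). -/
def shiftbarA {N M : ℕ} (C : Matrix (Fin N) (Fin M) ℕ) (D : Matrix (Fin M) (Fin N) ℕ)
    (x : XbarA C D) : XbarA C D :=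
  ⟨fun n => x.val (n + 1), fun n => x.prop (n + 1)⟩

/-- The shift homeomorphism `σ̄_B` on `X̄_B` (as a map). -/
def shiftbarB {N M : ℕ} (C : Matrix (Fin N) (Fin M) ℕ) (D : Matrix (Fin M) (Fin N) ℕ)
    (y : XbarB C D) : XbarB C D :=
  ⟨fun n => y.val (n + 1), fun n => y.prop (n + 1)⟩

/-!
The `n`-th symbol of `h x` is read off the symbols `x n` and `x (n + 1)`, and the `n`-th symbol
of the inverse map off `y (n - 1)` and `y n`. Maps whose coordinates depend on finitely many
coordinates of the input are continuous for the product topology over a discrete alphabet, and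
`h` commutes with the shifts by construction.
-/

theorem isLocallyConstant_of_factors {X Y Z : Type*} [TopologicalSpace X] [TopologicalSpace Y]
    [DiscreteTopology Y] {g : X → Y} (hg : Continuous g) {f : X → Z}
    (hf : ∀ x x', g x = g x' → f x = f x') : IsLocallyConstant f := by
  intro s
  have hpre : f ⁻¹' s = g ⁻¹' (g '' (f ⁻¹' s)) := by
    ext x
    constructor
    · exact fun hx => ⟨x, hx, rfl⟩
    · rintro ⟨x', hx', hgx⟩
      rw [Set.mem_preimage, ← hf x' x hgx]
      exact hx'
  rw [hpre]
  exact (isOpen_discrete _).preimage hg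

theorem continuous_of_finite_dependence {X ι κ α : Type*} {β : κ → Type*}
    [TopologicalSpace X] [TopologicalSpace α] [DiscreteTopology α] [∀ k, TopologicalSpace (β k)]
    {F : X → ι → α} (hF : Continuous F) {f : X → ∀ k, β k} (S : κ → Finset ι)
    (hf : ∀ x x' k, (∀ i ∈ S k, F x i = F x' i) → f x k = f x' k) : Continuous f :=
  continuous_pi fun k =>
    (isLocallyConstant_of_factors (g := fun x (i : S k) => F x i) (by fun_prop)
      fun x x' h => hf x x' k fun i hi => congrFun h ⟨i, hi⟩).continuous

section Conjugacy

variable {N M : ℕ} (C : Matrix (Fin N) (Fin M) ℕ) (D : Matrix (Fin M) (Fin N) ℕ)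

def XbarA.toXbarB (x : XbarA C D) : XbarB C D :=
  ⟨fun n => ⟨((x.val n).val.2, (x.val (n + 1)).val.1), x.prop n⟩,
    fun n => (x.val (n + 1)).prop⟩

def XbarB.toXbarA (y : XbarB C D) : XbarA C D :=
  ⟨fun n => ⟨((y.val (n - 1)).val.2, (y.val n).val.1), by
      simpa using y.prop (n - 1)⟩,
    fun n => by simpa using (y.val n).prop⟩

theorem XbarB.toXbarA_toXbarB (x : XbarA C D) : XbarB.toXbarA C D (XbarA.toXbarB C D x) = x :=
  Subtype.ext <| funext fun n => Subtype.ext <| by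
    simp only [XbarB.toXbarA, XbarA.toXbarB, sub_add_cancel]

theorem XbarA.toXbarB_toXbarA (y : XbarB C D) : XbarA.toXbarB C D (XbarB.toXbarA C D y) = y :=
  Subtype.ext <| funext fun n => Subtype.ext <| by
    simp only [XbarB.toXbarA, XbarA.toXbarB, add_sub_cancel_right]

theorem XbarA.continuous_toXbarB : Continuous (XbarA.toXbarB C D) :=
  Continuous.subtype_mk (continuous_of_finite_dependence continuous_subtype_val
    (fun n => {n, n + 1}) fun x x' n h => by
      simp only [Finset.mem_insert, Finset.mem_singleton, forall_eq_or_imp, forall_eq] at h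
      exact Subtype.ext (by simp only [h.1, h.2])) _

theorem XbarB.continuous_toXbarA : Continuous (XbarB.toXbarA C D) :=
  Continuous.subtype_mk (continuous_of_finite_dependence continuous_subtype_val
    (fun n => {n - 1, n}) fun y y' n h => by
      simp only [Finset.mem_insert, Finset.mem_singleton, forall_eq_or_imp, forall_eq] at h
      exact Subtype.ext (by simp only [h.1, h.2])) _

def XbarA.homeomorphXbarB : XbarA C D ≃ₜ XbarB C D where
  toFun := XbarA.toXbarB C D
  invFun := XbarB.toXbarA C D
  left_inv := XbarB.toXbarA_toXbarB C D
  right_inv := XbarA.toXbarB_toXbarA C D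
  continuous_toFun := XbarA.continuous_toXbarB C D
  continuous_invFun := XbarB.continuous_toXbarA C D

end Conjugacy

/-- Let `C`, `D` be rectangular nonnegative integer matrices, `A = CD`,
`B = DC`.  The map `h : X̄_A → X̄_B`, `h((c_n,d_n)_{n∈ℤ}) = ((d_n,c_{n+1}))_{n∈ℤ}`, is a
well-defined homeomorphism of the two-sided shift spaces satisfying `h ∘ σ̄_A = σ̄_B ∘ h`.
In particular, the two-sided topological Markov shifts of elementary equivalent nonnegative
integer matrices are topologically conjugate. -/
theorem stmt_13 (N M : ℕ) (C : Matrix (Fin N) (Fin M) ℕ) (D : Matrix (Fin M) (Fin N) ℕ) :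
    ∃ h : XbarA C D ≃ₜ XbarB C D,
      (∀ (x : XbarA C D) (n : ℤ),
        ((h x).val n).val.1 = (x.val n).val.2 ∧
        ((h x).val n).val.2 = (x.val (n + 1)).val.1) ∧
      (∀ x : XbarA C D, h (shiftbarA C D x) = shiftbarB C D (h x)) := by
  exact ⟨XbarA.homeomorphXbarB C D, fun x n => ⟨rfl, rfl⟩, fun x => rfl⟩
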